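/- arXiv:1812.11392 — 5 statements merged into one kernel-verified Lean document; each statement's English description precedes it below -/
import Mathlib

section
/- If f ∈ L¹(ℝⁿ) is supported on the cube Q(x,r) and has mean zero (∫_{Q(x,r)} f = 0), and K is a kernel satisfying the smoothness estimate |K(y,z) - K(y,x)| ≤ C |x-z|^δ / |x-y|^{n+δ} whenever |x-z| ≤ (1/2)|x-y| for some δ > 0, then ∫_{ℝⁿ \ Q(x, 2√n r)} |Tf(y)| dy ≤ C' ‖f‖_{L¹}, where Tf(y) = ∫ K(y,z) f(z) dz for y outside the support of f, and C' depends only on n, δ, C. -/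
/-!
Since `f` has mean zero, `Tf(y) = ∫ (K(y,z) - K(y,x)) f(z) dz`, so for `y` off `Q(x, 2√n r)` the
smoothness of `K` gives `|Tf(y)| ≤ C (√n r / 2)^δ ‖f‖₁ |y - x|^{-(n+δ)}`. That cube contains the
ball `B(x, √n r)`, and splitting the complement of a ball `B(x, R)` into dyadic shells
`2^k R ≤ |y - x| < 2^{k+1} R` bounds `∫_{|y-x| ≥ R} |y - x|^{-(n+δ)}` by the geometric series
`2^n R^{-δ} |B(0,1)| ∑ 2^{-kδ}`. For `R = √n r` the powers of `r` cancel.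
-/

open MeasureTheory Filter Set
open scoped ENNReal

noncomputable section

/-- The axis-parallel cube centered at `x` with side length `r`. -/
def cube {n : ℕ} (x : EuclideanSpace ℝ (Fin n)) (r : ℝ) :
    Set (EuclideanSpace ℝ (Fin n)) := {y | ∀ i, |y i - x i| < r / 2}

open Metric

section Cube

variable {n : ℕ} {x y z : EuclideanSpace ℝ (Fin n)} {r : ℝ}

lemma isOpen_cube (x : EuclideanSpace ℝ (Fin n)) (r : ℝ) : IsOpen (cube x r) := by
  simp only [cube, ofPred_forall]
  exact isOpen_iInter_of_finite fun i => isOpen_lt (by fun_prop) continuous_const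

lemma norm_sub_le_of_mem_cube (hr : 0 ≤ r) (hz : z ∈ cube x r) : ‖x - z‖ ≤ √n * r / 2 := by
  have hcoord : ∀ i, ‖(x - z) i‖ ^ 2 ≤ (r / 2) ^ 2 := fun i => by
    rw [PiLp.sub_apply, Real.norm_eq_abs, abs_sub_comm]
    exact pow_le_pow_left₀ (abs_nonneg _) (hz i).le 2
  calc ‖x - z‖ = √(∑ i, ‖(x - z) i‖ ^ 2) := EuclideanSpace.norm_eq _
    _ ≤ √(n * (r / 2) ^ 2) := by
      gcongr
      simpa using Finset.sum_le_sum fun i (_ : i ∈ Finset.univ) => hcoord i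
    _ = √n * r / 2 := by
      rw [Real.sqrt_mul n.cast_nonneg, Real.sqrt_sq (by positivity), mul_div_assoc]

lemma le_norm_sub_of_notMem_cube (hy : y ∉ cube x (2 * √n * r)) : √n * r ≤ ‖y - x‖ := by
  simp only [cube, mem_ofPred_eq, not_forall, not_lt] at hy
  obtain ⟨i, hi⟩ := hy
  calc √n * r = 2 * √n * r / 2 := by ring
    _ ≤ ‖(y - x) i‖ := by simpa using hi
    _ ≤ ‖y - x‖ := PiLp.norm_apply_le _ i

end Cube

lemma norm_integral_mul_le_of_integral_eq_zero {α 𝕜 : Type*} [MeasurableSpace α] [RCLike 𝕜]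
    {μ : Measure α} {f g : α → 𝕜} {c : 𝕜} {M : ℝ} (hM : 0 ≤ M) (hf : Integrable f μ)
    (hmean : ∫ z, f z ∂μ = 0) (hg : ∀ z ∈ Function.support f, ‖g z - c‖ ≤ M) :
    ‖∫ z, g z * f z ∂μ‖ ≤ M * ∫ z, ‖f z‖ ∂μ := by
  by_cases hgf : Integrable (fun z => g z * f z) μ
  · have hsub : ∫ z, g z * f z ∂μ = ∫ z, (g z - c) * f z ∂μ := by
      simp_rw [sub_mul]
      rw [integral_sub hgf (hf.const_mul c), integral_const_mul, hmean, mul_zero, sub_zero]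
    have hbound : ∀ z, ‖(g z - c) * f z‖ ≤ M * ‖f z‖ := fun z => by
      by_cases hz : f z = 0
      · simp [hz]
      · rw [norm_mul]
        exact mul_le_mul_of_nonneg_right (hg z hz) (norm_nonneg _)
    rw [hsub, ← integral_const_mul]
    exact norm_integral_le_of_norm_le (hf.norm.const_mul M) (.of_forall hbound)
  · rw [integral_undef hgf, norm_zero]
    exact mul_nonneg hM (integral_nonneg fun _ => norm_nonneg _)

section Radial

variable {E : Type*} [NormedAddCommGroup E] [NormedSpace ℝ E] [MeasurableSpace E] [BorelSpace E]
  [FiniteDimensional ℝ E] (μ : Measure E) [μ.IsAddHaarMeasure]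

local notation "d" => Module.finrank ℝ E

lemma setLIntegral_ball_diff_ball_rpow_le (x : E) {δ a : ℝ} (hδ : 0 ≤ δ) (ha : 0 < a) :
    ∫⁻ y in ball x (2 * a) \ ball x a, ENNReal.ofReal (‖y - x‖ ^ (-((d : ℝ) + δ))) ∂μ ≤
      ENNReal.ofReal (2 ^ d * a ^ (-δ)) * μ (ball 0 1) := by
  calc ∫⁻ y in ball x (2 * a) \ ball x a, ENNReal.ofReal (‖y - x‖ ^ (-((d : ℝ) + δ))) ∂μ
      ≤ ∫⁻ _ in ball x (2 * a) \ ball x a, ENNReal.ofReal (a ^ (-((d : ℝ) + δ))) ∂μ := by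
        refine setLIntegral_mono' (measurableSet_ball.diff measurableSet_ball) fun y hy => ?_
        have hay : a ≤ ‖y - x‖ := by simpa [dist_eq_norm] using hy.2
        exact ENNReal.ofReal_le_ofReal
          (Real.rpow_le_rpow_of_nonpos ha hay (neg_nonpos.mpr (by positivity)))
    _ ≤ ENNReal.ofReal (a ^ (-((d : ℝ) + δ))) * μ (ball x (2 * a)) := by
        rw [setLIntegral_const]
        gcongr
        exact sdiff_subset
    _ = ENNReal.ofReal (2 ^ d * a ^ (-δ)) * μ (ball 0 1) := by
        rw [μ.addHaar_ball_of_pos x (by positivity), ← mul_assoc, ← ENNReal.ofReal_mul (by positivity)]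
        congr 2
        rw [neg_add, Real.rpow_add ha, Real.rpow_neg ha.le, Real.rpow_natCast, mul_pow]
        field_simp

lemma setLIntegral_compl_ball_rpow_le (x : E) {δ R : ℝ} (hδ : 0 < δ) (hR : 0 < R) :
    ∫⁻ y in (ball x R)ᶜ, ENNReal.ofReal (‖y - x‖ ^ (-((d : ℝ) + δ))) ∂μ ≤
      ENNReal.ofReal (2 ^ d * R ^ (-δ) * (1 - 2 ^ (-δ))⁻¹) * μ (ball 0 1) := by
  have hcover : (ball x R)ᶜ ⊆ ⋃ k : ℕ, ball x (2 * (2 ^ k * R)) \ ball x (2 ^ k * R) := by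
    intro y hy
    have hRy : 1 ≤ ‖y - x‖ / R := by
      rw [one_le_div hR]; simpa [dist_eq_norm] using hy
    obtain ⟨k, hk, hk'⟩ := exists_nat_pow_near hRy one_lt_two
    rw [le_div_iff₀ hR] at hk
    rw [div_lt_iff₀ hR, pow_succ'] at hk'
    simp only [mem_iUnion, Set.mem_sdiff, mem_ball, dist_eq_norm, not_lt]
    exact ⟨k, by linarith, hk⟩
  have hq : (2 : ℝ) ^ (-δ) < 1 := Real.rpow_lt_one_of_one_lt_of_neg one_lt_two (neg_neg_of_pos hδ)
  have hshell : ∀ k : ℕ, (2 : ℝ) ^ d * (2 ^ k * R) ^ (-δ) = 2 ^ d * R ^ (-δ) * (2 ^ (-δ)) ^ k :=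
    fun k => by rw [Real.mul_rpow (by positivity) hR.le, ← Real.rpow_pow_comm zero_le_two]; ring
  have hgeom : ∑' k : ℕ, ENNReal.ofReal (2 ^ d * (2 ^ k * R) ^ (-δ)) =
      ENNReal.ofReal (2 ^ d * R ^ (-δ) * (1 - 2 ^ (-δ))⁻¹) := by
    simp_rw [hshell]
    rw [← ENNReal.ofReal_tsum_of_nonneg (fun k => by positivity)
      ((summable_geometric_of_lt_one (by positivity) hq).mul_left _),
      tsum_mul_left, tsum_geometric_of_lt_one (by positivity) hq]
  calc ∫⁻ y in (ball x R)ᶜ, ENNReal.ofReal (‖y - x‖ ^ (-((d : ℝ) + δ))) ∂μ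
      ≤ ∫⁻ y in ⋃ k : ℕ, ball x (2 * (2 ^ k * R)) \ ball x (2 ^ k * R),
          ENNReal.ofReal (‖y - x‖ ^ (-((d : ℝ) + δ))) ∂μ := lintegral_mono_set hcover
    _ ≤ ∑' k : ℕ, ∫⁻ y in ball x (2 * (2 ^ k * R)) \ ball x (2 ^ k * R),
          ENNReal.ofReal (‖y - x‖ ^ (-((d : ℝ) + δ))) ∂μ := lintegral_iUnion_le _ _
    _ ≤ ∑' k : ℕ, ENNReal.ofReal (2 ^ d * (2 ^ k * R) ^ (-δ)) * μ (ball 0 1) :=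
        ENNReal.tsum_le_tsum fun k =>
          setLIntegral_ball_diff_ball_rpow_le μ x hδ.le (by positivity)
    _ = ENNReal.ofReal (2 ^ d * R ^ (-δ) * (1 - 2 ^ (-δ))⁻¹) * μ (ball 0 1) := by
        rw [ENNReal.tsum_mul_right, hgeom]

end Radial

section Kernel

variable {n : ℕ} {δ C r : ℝ} {K : EuclideanSpace ℝ (Fin n) → EuclideanSpace ℝ (Fin n) → ℂ}
  {x : EuclideanSpace ℝ (Fin n)}

lemma norm_kernel_sub_le (hn : 0 < n) (hδ : 0 ≤ δ) (hC : 0 ≤ C) (hr : 0 < r)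
    (hK : ∀ y z : EuclideanSpace ℝ (Fin n), y ≠ x → ‖x - z‖ ≤ ‖x - y‖ / 2 →
      ‖K y z - K y x‖ ≤ C * ‖x - z‖ ^ δ / ‖x - y‖ ^ ((n : ℝ) + δ))
    {y z : EuclideanSpace ℝ (Fin n)} (hy : y ∉ cube x (2 * √n * r)) (hz : z ∈ cube x r) :
    ‖K y z - K y x‖ ≤ C * (√n * r / 2) ^ δ * ‖y - x‖ ^ (-((n : ℝ) + δ)) := by
  have hyx : √n * r ≤ ‖y - x‖ := le_norm_sub_of_notMem_cube hy
  have hxz : ‖x - z‖ ≤ √n * r / 2 := norm_sub_le_of_mem_cube hr.le hz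
  have hyx_pos : 0 < ‖y - x‖ := lt_of_lt_of_le (by positivity) hyx
  have hne : y ≠ x := fun h => by simp [h] at hyx_pos
  calc ‖K y z - K y x‖ ≤ C * ‖x - z‖ ^ δ / ‖y - x‖ ^ ((n : ℝ) + δ) := by
        simpa only [norm_sub_rev x y] using hK y z hne (by rw [norm_sub_rev x y]; linarith)
    _ ≤ C * (√n * r / 2) ^ δ / ‖y - x‖ ^ ((n : ℝ) + δ) := by gcongr
    _ = C * (√n * r / 2) ^ δ * ‖y - x‖ ^ (-((n : ℝ) + δ)) := by
        rw [Real.rpow_neg hyx_pos.le, div_eq_mul_inv]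

theorem lintegral_compl_cube_nnnorm_integral_le (hn : 0 < n) (hδ : 0 < δ) (hC : 0 ≤ C)
    (hr : 0 < r) {f : EuclideanSpace ℝ (Fin n) → ℂ} (hf : Integrable f)
    (hK : ∀ y z : EuclideanSpace ℝ (Fin n), y ≠ x → ‖x - z‖ ≤ ‖x - y‖ / 2 →
      ‖K y z - K y x‖ ≤ C * ‖x - z‖ ^ δ / ‖x - y‖ ^ ((n : ℝ) + δ))
    (hsupp : Function.support f ⊆ cube x r) (hmean : ∫ z, f z = 0) :
    ∫⁻ y in (cube x (2 * √n * r))ᶜ, (‖∫ z, K y z * f z‖₊ : ℝ≥0∞) ≤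
      ENNReal.ofReal (C * 2 ^ (-δ) * 2 ^ n * (1 - 2 ^ (-δ))⁻¹ *
        volume.real (ball (0 : EuclideanSpace ℝ (Fin n)) 1) * ∫ z, ‖f z‖) := by
  set a := √n * r
  have ha : 0 < a := by positivity
  have hq : (2 : ℝ) ^ (-δ) < 1 := Real.rpow_lt_one_of_one_lt_of_neg one_lt_two (neg_neg_of_pos hδ)
  set A := C * (a / 2) ^ δ * ∫ z, ‖f z‖
  have hpointwise : ∀ y ∈ (cube x (2 * √n * r))ᶜ, (‖∫ z, K y z * f z‖₊ : ℝ≥0∞) ≤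
      ENNReal.ofReal A * ENNReal.ofReal (‖y - x‖ ^ (-((n : ℝ) + δ))) := fun y hy => by
    rw [← ENNReal.ofReal_mul (by positivity), ← enorm_eq_nnnorm, ← ofReal_norm]
    refine ENNReal.ofReal_le_ofReal ((norm_integral_mul_le_of_integral_eq_zero (by positivity)
      hf hmean fun z hz => norm_kernel_sub_le hn hδ.le hC hr hK hy (hsupp hz)).trans_eq ?_)
    ring
  have hradial := setLIntegral_compl_ball_rpow_le volume x hδ ha
  rw [finrank_euclideanSpace_fin] at hradial
  calc ∫⁻ y in (cube x (2 * √n * r))ᶜ, (‖∫ z, K y z * f z‖₊ : ℝ≥0∞)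
      ≤ ∫⁻ y in (ball x a)ᶜ, ENNReal.ofReal A * ENNReal.ofReal (‖y - x‖ ^ (-((n : ℝ) + δ))) :=
        (setLIntegral_mono' (isOpen_cube _ _).measurableSet.compl hpointwise).trans
          (lintegral_mono_set fun y hy => by
            simpa [dist_eq_norm] using le_norm_sub_of_notMem_cube hy)
    _ = ENNReal.ofReal A *
          ∫⁻ y in (ball x a)ᶜ, ENNReal.ofReal (‖y - x‖ ^ (-((n : ℝ) + δ))) :=
        lintegral_const_mul' _ _ ENNReal.ofReal_ne_top
    _ ≤ ENNReal.ofReal A * (ENNReal.ofReal (2 ^ n * a ^ (-δ) * (1 - 2 ^ (-δ))⁻¹) *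
          ENNReal.ofReal (volume.real (ball (0 : EuclideanSpace ℝ (Fin n)) 1))) := by
        rw [ofReal_measureReal measure_ball_lt_top.ne]
        gcongr
    _ = _ := by
        have hq' : 0 < (1 - (2 : ℝ) ^ (-δ))⁻¹ := inv_pos.mpr (by linarith)
        rw [← ENNReal.ofReal_mul (by positivity), ← ENNReal.ofReal_mul (by positivity)]
        congr 1
        have hscale : (a / 2) ^ δ * a ^ (-δ) = 2 ^ (-δ) := by
          rw [Real.div_rpow ha.le zero_le_two, Real.rpow_neg ha.le, Real.rpow_neg zero_le_two]
          field_simp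
        simp only [A]
        linear_combination C * 2 ^ n * (1 - 2 ^ (-δ))⁻¹ *
          volume.real (ball (0 : EuclideanSpace ℝ (Fin n)) 1) * (∫ z, ‖f z‖) * hscale

end Kernel

/-- Lemma 1: if `f ∈ L¹` is supported on `Q(x,r)` with mean zero and `K` satisfies the
smoothness estimate centered at `x`, then `∫_{ℝⁿ \ Q(x, 2√n r)} |Tf| ≤ C' ‖f‖₁`. -/
theorem stmt0 (n : ℕ) (hn : 0 < n) (δ C : ℝ) (hδ : 0 < δ) (hC : 0 < C) :
    ∃ C' > (0 : ℝ), ∀ (K : EuclideanSpace ℝ (Fin n) → EuclideanSpace ℝ (Fin n) → ℂ)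
      (f : EuclideanSpace ℝ (Fin n) → ℂ) (x : EuclideanSpace ℝ (Fin n)) (r : ℝ),
      0 < r → Integrable f →
      (∀ y z : EuclideanSpace ℝ (Fin n), y ≠ x → ‖x - z‖ ≤ ‖x - y‖ / 2 →
        ‖K y z - K y x‖ ≤ C * ‖x - z‖ ^ δ / ‖x - y‖ ^ ((n : ℝ) + δ)) →
      Function.support f ⊆ cube x r →
      (∫ z, f z) = 0 →
      (∫⁻ y in (cube x (2 * Real.sqrt n * r))ᶜ, (‖∫ z, K y z * f z‖₊ : ℝ≥0∞)) ≤
        ENNReal.ofReal (C' * ∫ z, ‖f z‖) := by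
  have hq : 0 < 1 - (2 : ℝ) ^ (-δ) :=
    sub_pos.mpr (Real.rpow_lt_one_of_one_lt_of_neg one_lt_two (neg_neg_of_pos hδ))
  have hball : 0 < volume.real (ball (0 : EuclideanSpace ℝ (Fin n)) 1) :=
    ENNReal.toReal_pos (measure_ball_pos volume _ one_pos).ne' measure_ball_lt_top.ne
  exact ⟨_, by positivity, fun K f x r hr hf hK hsupp hmean =>
    lintegral_compl_cube_nnnorm_integral_le hn hδ hC.le hr hf hK hsupp hmean⟩
end
end

section
/- For any finite collection of cubes Q(x₁, r₁), …, Q(x_N, r_N) in ℝⁿ and any a > 1, the Lebesgue measure satisfies |⋃_{j=1}^N Q(x_j, a r_j)| ≤ aⁿ |⋃_{j=1}^N Q(x_j, r_j)|. -/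
open MeasureTheory Filter Set
open scoped ENNReal

noncomputable section

/-!
In dimension one, two overlapping intervals can be replaced by their convex hull without changing
the union, and the dilate of the hull contains the dilates of both; after finitely many merges the
intervals are pairwise disjoint and the bound `|⋃ a Iⱼ| ≤ ∑ |a Iⱼ| = a |⋃ Iⱼ|` is additivity.
Cubes are products of intervals, and slicing a finite union of products `Aⱼ × Bⱼ` at a point gives a
finite union of a subfamily of the factors. Hence by Tonelli a dilation bound for every finite
subfamily in each factor multiplies to one for the product, and induction on the dimension
yields the factor `aⁿ`.
-/

open Metric

theorem Metric.ball_mul_subset_ball_mul {E : Type*} [PseudoMetricSpace E] {x y : E}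
    {r₁ r a : ℝ} (h : r₁ + dist x y ≤ r) (ha : 1 ≤ a) : ball x (a * r₁) ⊆ ball y (a * r) :=
  ball_subset_ball' <| by
    nlinarith [mul_le_mul_of_nonneg_left h (by linarith : (0 : ℝ) ≤ a),
      le_mul_of_one_le_left (dist_nonneg (x := x) (y := y)) ha]

theorem Real.exists_ball_eq_union_ball {c₁ c₂ r₁ r₂ : ℝ}
    (h : (ball c₁ r₁ ∩ ball c₂ r₂).Nonempty) :
    ∃ c r, ball c r = ball c₁ r₁ ∪ ball c₂ r₂ ∧ r₁ + dist c₁ c ≤ r ∧ r₂ + dist c₂ c ≤ r := by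
  obtain ⟨t, ht₁, ht₂⟩ := h
  rw [Real.ball_eq_Ioo, mem_Ioo] at ht₁ ht₂
  set lo := min (c₁ - r₁) (c₂ - r₂)
  set hi := max (c₁ + r₁) (c₂ + r₂)
  have hlo₁ : lo ≤ c₁ - r₁ := min_le_left _ _
  have hlo₂ : lo ≤ c₂ - r₂ := min_le_right _ _
  have hhi₁ : c₁ + r₁ ≤ hi := le_max_left _ _
  have hhi₂ : c₂ + r₂ ≤ hi := le_max_right _ _
  refine ⟨(lo + hi) / 2, (hi - lo) / 2, ?_, ?_, ?_⟩
  · rw [Real.ball_eq_Ioo, Real.ball_eq_Ioo, Real.ball_eq_Ioo,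
      Ioo_union_Ioo' (by linarith) (by linarith)]
    congr 1 <;> ring
  all_goals
    rw [Real.dist_eq, ← le_sub_iff_add_le', abs_le]
    constructor <;> linarith

theorem MeasureTheory.Measure.addHaar_biUnion_ball_mul_le_of_pairwiseDisjoint {ι E : Type*}
    [NormedAddCommGroup E] [NormedSpace ℝ E] [MeasurableSpace E] [BorelSpace E]
    [FiniteDimensional ℝ E] (μ : Measure E) [μ.IsAddHaarMeasure] {s : Finset ι} {c : ι → E}
    {r : ι → ℝ} (hs : (s : Set ι).PairwiseDisjoint fun j => ball (c j) (r j)) {a : ℝ}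
    (ha : 0 < a) :
    μ (⋃ j ∈ s, ball (c j) (a * r j)) ≤
      ENNReal.ofReal (a ^ Module.finrank ℝ E) * μ (⋃ j ∈ s, ball (c j) (r j)) :=
  calc μ (⋃ j ∈ s, ball (c j) (a * r j))
      ≤ ∑ j ∈ s, μ (ball (c j) (a * r j)) := measure_biUnion_finset_le s _
    _ = ∑ j ∈ s, ENNReal.ofReal (a ^ Module.finrank ℝ E) * μ (ball (c j) (r j)) := by
      simp only [Measure.addHaar_ball_mul_of_pos μ _ ha, Measure.addHaar_ball_center]
    _ = ENNReal.ofReal (a ^ Module.finrank ℝ E) * μ (⋃ j ∈ s, ball (c j) (r j)) := by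
      rw [← Finset.mul_sum, measure_biUnion_finset hs fun _ _ => measurableSet_ball]

theorem Real.volume_biUnion_ball_mul_le' {a : ℝ} (ha : 1 ≤ a) (S : Finset (ℝ × ℝ)) :
    volume (⋃ p ∈ S, ball p.1 (a * p.2)) ≤ ENNReal.ofReal a * volume (⋃ p ∈ S, ball p.1 p.2) := by
  classical
  induction hn : S.card using Nat.strong_induction_on generalizing S with
  | _ n ih =>
  by_cases hS : (S : Set (ℝ × ℝ)).PairwiseDisjoint fun p => ball p.1 p.2
  · simpa using
      Measure.addHaar_biUnion_ball_mul_le_of_pairwiseDisjoint volume hS (by linarith : 0 < a)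
  obtain ⟨p, hp, q, hq, hpq, hpq'⟩ :
      ∃ p ∈ S, ∃ q ∈ S, p ≠ q ∧ (ball p.1 p.2 ∩ ball q.1 q.2).Nonempty := by
    simpa [Set.PairwiseDisjoint, Set.Pairwise, Function.onFun, Set.not_disjoint_iff_nonempty_inter]
      using hS
  obtain ⟨c, r, hunion, hp_le, hq_le⟩ := Real.exists_ball_eq_union_ball hpq'
  set T := (S.erase p).erase q
  have hST : S = insert p (insert q T) := by
    rw [Finset.insert_erase (Finset.mem_erase.2 ⟨hpq.symm, hq⟩), Finset.insert_erase hp]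
  have hcard : (insert (c, r) T).card < n := by
    have hq' : q ∈ S.erase p := Finset.mem_erase.2 ⟨hpq.symm, hq⟩
    have h₁ := Finset.card_insert_le (c, r) T
    have h₂ : T.card + 1 = (S.erase p).card := Finset.card_erase_add_one hq'
    have h₃ : (S.erase p).card + 1 = S.card := Finset.card_erase_add_one hp
    omega
  calc volume (⋃ x ∈ S, ball x.1 (a * x.2))
      ≤ volume (⋃ x ∈ insert (c, r) T, ball x.1 (a * x.2)) := by
        refine measure_mono ?_
        rw [hST]
        simp only [Finset.set_biUnion_insert, ← union_assoc]
        exact union_subset_union_left _ <| union_subset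
          (ball_mul_subset_ball_mul hp_le ha) (ball_mul_subset_ball_mul hq_le ha)
    _ ≤ ENNReal.ofReal a * volume (⋃ x ∈ insert (c, r) T, ball x.1 x.2) := ih _ hcard _ rfl
    _ = ENNReal.ofReal a * volume (⋃ x ∈ S, ball x.1 x.2) := by
        rw [hST]
        simp only [Finset.set_biUnion_insert, ← union_assoc, hunion]

theorem Real.volume_biUnion_ball_mul_le {ι : Type*} {a : ℝ} (ha : 1 ≤ a) (c r : ι → ℝ)
    (s : Finset ι) :
    volume (⋃ j ∈ s, ball (c j) (a * r j)) ≤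
      ENNReal.ofReal a * volume (⋃ j ∈ s, ball (c j) (r j)) := by
  classical
  simpa only [Finset.set_biUnion_finset_image] using
    Real.volume_biUnion_ball_mul_le' ha (s.image fun j => (c j, r j))

theorem Set.mk_preimage_biUnion_prod_right {ι α β : Type*} (s : Finset ι) (A : ι → Set α)
    (B : ι → Set β) (x : α) [DecidablePred (x ∈ A ·)] :
    Prod.mk x ⁻¹' (⋃ j ∈ s, A j ×ˢ B j) = ⋃ j ∈ s.filter (x ∈ A ·), B j := by
  ext y
  simp [and_assoc, and_left_comm]

theorem Set.mk_preimage_biUnion_prod_left {ι α β : Type*} (s : Finset ι) (A : ι → Set α)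
    (B : ι → Set β) (y : β) [DecidablePred (y ∈ B ·)] :
    (·, y) ⁻¹' (⋃ j ∈ s, A j ×ˢ B j) = ⋃ j ∈ s.filter (y ∈ B ·), A j := by
  ext x
  simp [and_left_comm, and_comm]

section Prod

variable {ι X Y : Type*} [MeasurableSpace X] [MeasurableSpace Y] {μ : Measure X} {ν : Measure Y}
  [SFinite ν]

theorem MeasureTheory.Measure.prod_biUnion_prod_le_of_left [SFinite μ] {A A' : ι → Set X}
    {B : ι → Set Y} (hA : ∀ j, MeasurableSet (A j)) (hA' : ∀ j, MeasurableSet (A' j))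
    (hB : ∀ j, MeasurableSet (B j)) {α : ℝ≥0∞}
    (hμ : ∀ s : Finset ι, μ (⋃ j ∈ s, A' j) ≤ α * μ (⋃ j ∈ s, A j)) (s : Finset ι) :
    μ.prod ν (⋃ j ∈ s, A' j ×ˢ B j) ≤ α * μ.prod ν (⋃ j ∈ s, A j ×ˢ B j) := by
  classical
  have hT : MeasurableSet (⋃ j ∈ s, A j ×ˢ B j) :=
    Finset.measurableSet_biUnion s fun j _ => (hA j).prod (hB j)
  have hT' : MeasurableSet (⋃ j ∈ s, A' j ×ˢ B j) :=
    Finset.measurableSet_biUnion s fun j _ => (hA' j).prod (hB j)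
  calc μ.prod ν (⋃ j ∈ s, A' j ×ˢ B j)
      = ∫⁻ y, μ ((·, y) ⁻¹' ⋃ j ∈ s, A' j ×ˢ B j) ∂ν := Measure.prod_apply_symm hT'
    _ ≤ ∫⁻ y, α * μ ((·, y) ⁻¹' ⋃ j ∈ s, A j ×ˢ B j) ∂ν := lintegral_mono fun y => by
      simpa only [mk_preimage_biUnion_prod_left] using hμ (s.filter (y ∈ B ·))
    _ = α * μ.prod ν (⋃ j ∈ s, A j ×ˢ B j) := by
      rw [lintegral_const_mul _ (measurable_measure_prodMk_right hT),
        Measure.prod_apply_symm hT]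

theorem MeasureTheory.Measure.prod_biUnion_prod_le_of_right {A : ι → Set X} {B B' : ι → Set Y}
    (hA : ∀ j, MeasurableSet (A j)) (hB : ∀ j, MeasurableSet (B j))
    (hB' : ∀ j, MeasurableSet (B' j)) {β : ℝ≥0∞}
    (hν : ∀ s : Finset ι, ν (⋃ j ∈ s, B' j) ≤ β * ν (⋃ j ∈ s, B j)) (s : Finset ι) :
    μ.prod ν (⋃ j ∈ s, A j ×ˢ B' j) ≤ β * μ.prod ν (⋃ j ∈ s, A j ×ˢ B j) := by
  classical
  have hT : MeasurableSet (⋃ j ∈ s, A j ×ˢ B j) :=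
    Finset.measurableSet_biUnion s fun j _ => (hA j).prod (hB j)
  have hT' : MeasurableSet (⋃ j ∈ s, A j ×ˢ B' j) :=
    Finset.measurableSet_biUnion s fun j _ => (hA j).prod (hB' j)
  calc μ.prod ν (⋃ j ∈ s, A j ×ˢ B' j)
      = ∫⁻ x, ν (Prod.mk x ⁻¹' ⋃ j ∈ s, A j ×ˢ B' j) ∂μ := Measure.prod_apply hT'
    _ ≤ ∫⁻ x, β * ν (Prod.mk x ⁻¹' ⋃ j ∈ s, A j ×ˢ B j) ∂μ := lintegral_mono fun x => by
      simpa only [mk_preimage_biUnion_prod_right] using hν (s.filter (x ∈ A ·))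
    _ = β * μ.prod ν (⋃ j ∈ s, A j ×ˢ B j) := by
      rw [lintegral_const_mul _ (measurable_measure_prodMk_left hT), Measure.prod_apply hT]

theorem MeasureTheory.Measure.prod_biUnion_prod_le [SFinite μ] {A A' : ι → Set X}
    {B B' : ι → Set Y}
    (hA : ∀ j, MeasurableSet (A j)) (hA' : ∀ j, MeasurableSet (A' j))
    (hB : ∀ j, MeasurableSet (B j)) (hB' : ∀ j, MeasurableSet (B' j)) {α β : ℝ≥0∞}
    (hμ : ∀ s : Finset ι, μ (⋃ j ∈ s, A' j) ≤ α * μ (⋃ j ∈ s, A j))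
    (hν : ∀ s : Finset ι, ν (⋃ j ∈ s, B' j) ≤ β * ν (⋃ j ∈ s, B j)) (s : Finset ι) :
    μ.prod ν (⋃ j ∈ s, A' j ×ˢ B' j) ≤ α * β * μ.prod ν (⋃ j ∈ s, A j ×ˢ B j) :=
  calc μ.prod ν (⋃ j ∈ s, A' j ×ˢ B' j)
      ≤ α * μ.prod ν (⋃ j ∈ s, A j ×ˢ B' j) := prod_biUnion_prod_le_of_left hA hA' hB' hμ s
    _ ≤ α * (β * μ.prod ν (⋃ j ∈ s, A j ×ˢ B j)) := by
      gcongr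
      exact prod_biUnion_prod_le_of_right hA hB hB' hν s
    _ = α * β * μ.prod ν (⋃ j ∈ s, A j ×ˢ B j) := (mul_assoc _ _ _).symm

end Prod

theorem Set.univ_pi_eq_preimage_piFinSuccAbove {α : Type*} [MeasurableSpace α] {n : ℕ}
    (f : Fin (n + 1) → Set α) :
    univ.pi f =
      MeasurableEquiv.piFinSuccAbove (fun _ => α) 0 ⁻¹' (f 0 ×ˢ univ.pi fun i => f i.succ) := by
  ext y
  simp [Fin.forall_fin_succ, Fin.tail]

theorem volume_biUnion_pi_ball_mul_le {ι : Type*} {a : ℝ} (ha : 1 ≤ a) (n : ℕ)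
    (x r : ι → Fin n → ℝ) (s : Finset ι) :
    volume (⋃ j ∈ s, univ.pi fun i => ball (x j i) (a * r j i)) ≤
      ENNReal.ofReal (a ^ n) * volume (⋃ j ∈ s, univ.pi fun i => ball (x j i) (r j i)) := by
  induction n generalizing s with
  | zero => simp [Set.eq_univ_of_forall]
  | succ n ih =>
  have he := volume_preserving_piFinSuccAbove (fun _ : Fin (n + 1) => ℝ) 0
  have hvol (f : ι → Fin (n + 1) → Set ℝ) : volume (⋃ j ∈ s, univ.pi (f j)) =
      (volume.prod volume) (⋃ j ∈ s, f j 0 ×ˢ univ.pi fun i : Fin n => f j i.succ) := by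
    rw [← Measure.volume_eq_prod, ← he.measure_preimage_equiv]
    simp only [preimage_iUnion, univ_pi_eq_preimage_piFinSuccAbove]
  calc volume (⋃ j ∈ s, univ.pi fun i => ball (x j i) (a * r j i))
      = (volume.prod volume) (⋃ j ∈ s, ball (x j 0) (a * r j 0) ×ˢ
          univ.pi fun i : Fin n => ball (x j i.succ) (a * r j i.succ)) := hvol _
    _ ≤ ENNReal.ofReal a * ENNReal.ofReal (a ^ n) * (volume.prod volume) (⋃ j ∈ s,
          ball (x j 0) (r j 0) ×ˢ univ.pi fun i : Fin n => ball (x j i.succ) (r j i.succ)) :=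
        Measure.prod_biUnion_prod_le (fun _ => measurableSet_ball) (fun _ => measurableSet_ball)
          (fun _ => .univ_pi fun _ => measurableSet_ball)
          (fun _ => .univ_pi fun _ => measurableSet_ball)
          (Real.volume_biUnion_ball_mul_le ha _ _) (ih _ _) s
    _ = ENNReal.ofReal (a ^ (n + 1)) * volume (⋃ j ∈ s, univ.pi fun i => ball (x j i) (r j i)) := by
        rw [hvol fun j i => ball (x j i) (r j i), ← ENNReal.ofReal_mul (by linarith), pow_succ']

theorem stmt3_general (n : ℕ) (N : ℕ) (x : Fin N → EuclideanSpace ℝ (Fin n)) (r : Fin N → ℝ)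
    (a : ℝ) (ha : 1 < a) :
    volume (⋃ j, cube (x j) (a * r j)) ≤
      ENNReal.ofReal (a ^ n) * volume (⋃ j, cube (x j) (r j)) := by
  have he := EuclideanSpace.volume_preserving_symm_measurableEquiv_toLp (Fin n)
  have hcubes (ρ : Fin N → ℝ) :
      ⋃ j, cube (x j) (ρ j) = (MeasurableEquiv.toLp 2 (Fin n → ℝ)).symm ⁻¹'
      ⋃ j ∈ Finset.univ, univ.pi fun i => ball (x j i) (ρ j / 2) := by
    ext y
    simp [cube, Real.dist_eq]
  rw [hcubes, hcubes, he.measure_preimage_equiv, he.measure_preimage_equiv]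
  simpa only [mul_div_assoc] using
    volume_biUnion_pi_ball_mul_le ha.le n (fun j i => x j i) (fun j _ => r j / 2) Finset.univ

/-- For finite unions of cubes, `|⋃ Q(xⱼ, a rⱼ)| ≤ aⁿ |⋃ Q(xⱼ, rⱼ)|`. -/
theorem stmt3 (n : ℕ) (N : ℕ) (x : Fin N → EuclideanSpace ℝ (Fin n)) (r : Fin N → ℝ)
    (hr : ∀ j, 0 < r j) (a : ℝ) (ha : 1 < a) :
    volume (⋃ j, cube (x j) (a * r j)) ≤
      ENNReal.ofReal (a ^ n) * volume (⋃ j, cube (x j) (r j)) :=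
  stmt3_general n N x r a ha
end
end

section
/- Let Q₁ = Q(x₁,r₁), …, Q_N = Q(x_N, r_N) be cubes with r₁ ≥ r₂ ≥ ⋯ ≥ r_N, and define the disjointification F_j = Q(x_j, r_j) \ ⋃_{k<j} F_k and similarly F_j* = Q(x_j, a r_j) \ ⋃_{k<j} F_k* for a fixed a > 1. Then for each j, F_j* is contained in the dilate {a(y - x_j) + x_j : y ∈ F_j} of F_j. -/
open MeasureTheory Filter Set
open scoped ENNReal

noncomputable section

/-!
A point `y ∈ Fⱼ*` is the dilate of `z = xⱼ + a⁻¹ (y - xⱼ) ∈ Qⱼ`. If `z` lay in an earlier cube `Qₖ`,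
which is at least as large as `Qⱼ`, then dilating about `xⱼ ∈ Qⱼ` would move `z` by less than
`(a - 1) rₖ / 2` in each coordinate, putting `y` in `Q(xₖ, a rₖ)`. Since each `Fⱼ` is just
`Qⱼ` minus the earlier cubes, this contradicts `y ∈ Fⱼ*`.
-/

def IsDisjointification {ι α : Type*} [LT ι] (S F : ι → Set α) : Prop :=
  ∀ j, F j = S j \ ⋃ k, ⋃ (_ : k < j), F k

namespace IsDisjointification

variable {ι α : Type*} [Preorder ι] {S F : ι → Set α}

theorem iUnion_lt_eq (hF : IsDisjointification S F) (j : ι) :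
    ⋃ k, ⋃ (_ : k < j), F k = ⋃ k, ⋃ (_ : k < j), S k := by
  refine Subset.antisymm (iUnion₂_mono fun k _ => (hF k).subset.trans sdiff_subset) ?_
  simp only [iUnion_subset_iff]
  intro k hkj y hy
  by_cases hyF : y ∈ ⋃ l, ⋃ (_ : l < k), F l
  · obtain ⟨l, hlk, hyl⟩ := mem_iUnion₂.1 hyF
    exact mem_iUnion₂.2 ⟨l, hlk.trans hkj, hyl⟩
  · exact mem_iUnion₂.2 ⟨k, hkj, (hF k).symm ▸ ⟨hy, hyF⟩⟩

theorem eq_diff_iUnion_lt (hF : IsDisjointification S F) (j : ι) :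
    F j = S j \ ⋃ k, ⋃ (_ : k < j), S k := by
  rw [hF j, hF.iUnion_lt_eq]

end IsDisjointification

section Cube

variable {n : ℕ}

theorem smul_sub_add_apply (a : ℝ) (z c : EuclideanSpace ℝ (Fin n)) (i : Fin n) :
    (a • (z - c) + c) i = a * (z i - c i) + c i := by
  simp

theorem smul_sub_add_mem_cube_iff {a : ℝ} (ha : 0 < a) (z c : EuclideanSpace ℝ (Fin n)) (r : ℝ) :
    a • (z - c) + c ∈ cube c (a * r) ↔ z ∈ cube c r := by
  simp only [cube, mem_ofPred_eq, smul_sub_add_apply, add_sub_cancel_right, abs_mul,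
    abs_of_pos ha, mul_div_assoc, mul_lt_mul_iff_right₀ ha]

theorem smul_sub_add_mem_cube_of_mem {a : ℝ} (ha : 1 ≤ a) {z c x : EuclideanSpace ℝ (Fin n)}
    {r s : ℝ} (hzc : z ∈ cube c r) (hzx : z ∈ cube x s) (hrs : r ≤ s) :
    a • (z - c) + c ∈ cube x (a * s) := by
  intro i
  calc |(a • (z - c) + c) i - x i| = |(z i - x i) + (a - 1) * (z i - c i)| := by
        rw [smul_sub_add_apply]; congr 1; ring
    _ ≤ |z i - x i| + (a - 1) * |z i - c i| := by
        refine (abs_add_le _ _).trans_eq ?_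
        rw [abs_mul, abs_of_nonneg (sub_nonneg.2 ha)]
    _ < s / 2 + (a - 1) * (s / 2) :=
        add_lt_add_of_lt_of_le (hzx i)
          (mul_le_mul_of_nonneg_left ((hzc i).le.trans (by linarith)) (sub_nonneg.2 ha))
    _ = a * s / 2 := by ring

end Cube

theorem stmt4_general (n : ℕ) (N : ℕ) (x : Fin N → EuclideanSpace ℝ (Fin n)) (r : Fin N → ℝ)
    (hmono : ∀ j k : Fin N, j ≤ k → r k ≤ r j)
    (a : ℝ) (ha : 1 < a)
    (F Fstar : Fin N → Set (EuclideanSpace ℝ (Fin n)))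
    (hF : ∀ j, F j = cube (x j) (r j) \ ⋃ k, ⋃ (_ : k < j), F k)
    (hFstar : ∀ j, Fstar j = cube (x j) (a * r j) \ ⋃ k, ⋃ (_ : k < j), Fstar k) :
    ∀ j, Fstar j ⊆ (fun y => a • (y - x j) + x j) '' F j := by
  have ha0 : 0 < a := one_pos.trans ha
  intro j y hy
  obtain ⟨z, rfl⟩ : ∃ z, a • (z - x j) + x j = y :=
    ⟨x j + a⁻¹ • (y - x j), by simp [smul_smul, ha0.ne']⟩
  refine mem_image_of_mem _ ?_
  rw [IsDisjointification.eq_diff_iUnion_lt hFstar, Set.mem_sdiff, mem_iUnion₂] at hy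
  obtain ⟨hyj, hyk⟩ := hy
  have hzj : z ∈ cube (x j) (r j) := (smul_sub_add_mem_cube_iff ha0 _ _ _).1 hyj
  rw [IsDisjointification.eq_diff_iUnion_lt hF, Set.mem_sdiff, mem_iUnion₂]
  refine ⟨hzj, fun ⟨k, hkj, hzk⟩ => hyk ⟨k, hkj, ?_⟩⟩
  exact smul_sub_add_mem_cube_of_mem ha.le hzj hzk (hmono k j hkj.le)

/-- Each disjointified dilated piece `Fⱼ*` is contained in the dilate of `Fⱼ` about `xⱼ`. -/
theorem stmt4 (n : ℕ) (N : ℕ) (x : Fin N → EuclideanSpace ℝ (Fin n)) (r : Fin N → ℝ)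
    (hrpos : ∀ j, 0 < r j) (hmono : ∀ j k : Fin N, j ≤ k → r k ≤ r j)
    (a : ℝ) (ha : 1 < a)
    (F Fstar : Fin N → Set (EuclideanSpace ℝ (Fin n)))
    (hF : ∀ j, F j = cube (x j) (r j) \ ⋃ k, ⋃ (_ : k < j), F k)
    (hFstar : ∀ j, Fstar j = cube (x j) (a * r j) \ ⋃ k, ⋃ (_ : k < j), Fstar k) :
    ∀ j, Fstar j ⊆ (fun y => a • (y - x j) + x j) '' F j :=
  stmt4_general n N x r hmono a ha F Fstar hF hFstar
end
end

section
/- The function h(x) = (1/x)(1+x)^{1 + 1/x} satisfies h(x) ≤ 4 for all x ∈ [1, ∞). -/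
/-! Write `h(x) = ((1 + x) / x) · (1 + x)^{1/x}`. For `x ≥ 1` the first factor is at most `2`,
and Bernoulli's inequality `1 + x ≤ 2^x` bounds the second one by `2`. -/

open MeasureTheory Filter Set
open scoped ENNReal

noncomputable section

open Real

lemma one_add_le_two_rpow {x : ℝ} (hx : 1 ≤ x) : 1 + x ≤ 2 ^ x := by
  simpa [one_add_one_eq_two] using one_add_mul_self_le_rpow_one_add (s := 1) (by norm_num) hx

lemma one_add_rpow_inv_le_two {x : ℝ} (hx : 1 ≤ x) : (1 + x) ^ x⁻¹ ≤ 2 :=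
  (rpow_inv_le_iff_of_pos (by linarith) zero_le_two (by linarith)).2 (one_add_le_two_rpow hx)

lemma one_add_div_le_two {x : ℝ} (hx : 1 ≤ x) : (1 + x) / x ≤ 2 := by
  rw [div_le_iff₀ (by linarith)]
  linarith

/-- The function `h(x) = (1/x)(1+x)^{1+1/x}` is bounded by `4` on `[1, ∞)`. -/
theorem stmt7 : ∀ x : ℝ, 1 ≤ x → (1 / x) * (1 + x) ^ (1 + 1 / x) ≤ 4 := by
  intro x hx
  calc (1 / x) * (1 + x) ^ (1 + 1 / x)
      = (1 + x) / x * (1 + x) ^ x⁻¹ := by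
        rw [rpow_add (by linarith), rpow_one, one_div]
        ring
    _ ≤ 2 * 2 :=
      mul_le_mul (one_add_div_le_two hx) (one_add_rpow_inv_le_two hx) (by positivity) zero_le_two
    _ = 4 := by norm_num
end
end

section
/- Let b ∈ L¹(ℝⁿ) be supported on a cube Q = Q(c, s), let E ⊆ Q(c, ρ) be a Borel set with λ |E| = ∫ b, and let K be a kernel satisfying the smoothness condition |K(y,z)-K(y,c)| ≤ C|c-z|^δ|c-y|^{-n-δ} for |c-z| ≤ |c-y|/2. Then ∫_{ℝⁿ \ (Q(c, 2√n s) ∪ Q(c, 2√n ρ))} |T(b − λ𝟙_E)(y)| dy ≤ C'(‖b‖_{L¹} + λ|E|) ≤ 2C'‖b‖_{L¹}, where T is the integral operator with kernel K. -/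
/-!
Put `f = b - λ𝟙_E`. It has mean zero, `‖f‖₁ ≤ ‖b‖₁ + λ|E|`, and it is supported in the cube
`Q(c, max(s, ρ))`, hence in the closed ball of radius `r = √n · max(s, ρ) / 2` about `c`, while
every `y` outside the two enlarged cubes has `|y - c| ≥ 2r`. For such `y` the mean-zero property
lets one replace `K(y, z)` by `K(y, z) - K(y, c)`, and the smoothness of `K` gives
`|Tf(y)| ≤ C r^δ ‖f‖₁ |y - c|^(-n-δ)`. Integrating in polar coordinates over `|y - c| ≥ 2r` gives
`C' ‖f‖₁` with `C' = C n |B(0,1)| / (2^δ δ)`, independent of `r`. Finally `λ|E| = ∫ b ≤ ‖b‖₁`.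
-/

open MeasureTheory Filter Set
open scoped ENNReal

noncomputable section

open Metric Module

section RadialTail

variable {R p : ℝ}

lemma pow_smul_indicator_rpow_neg {d : ℕ} (hd : 0 < d) {t : ℝ} (ht : 0 < t) :
    t ^ (d - 1) • (Ici R).indicator (fun t : ℝ => t ^ (-p)) t =
      (Ici R).indicator (fun t : ℝ => t ^ ((d : ℝ) - p - 1)) t := by
  by_cases htR : t ∈ Ici R
  · rw [indicator_of_mem htR, indicator_of_mem htR, smul_eq_mul, ← Real.rpow_natCast,
      ← Real.rpow_add ht, Nat.cast_sub hd, Nat.cast_one]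
    ring_nf
  · simp [indicator_of_notMem htR]

lemma integrable_indicator_Ici_rpow (hR : 0 < R) {q : ℝ} (hq : q < -1) :
    Integrable ((Ici R).indicator fun t : ℝ => t ^ q) :=
  (integrable_indicator_iff measurableSet_Ici).2 <|
    (integrableOn_Ici_iff_integrableOn_Ioi).2 (integrableOn_Ioi_rpow_of_lt hq hR)

lemma indicator_compl_ball_norm_sub_rpow {E : Type*} [NormedAddCommGroup E] (c : E) :
    (ball c R)ᶜ.indicator (fun y => ‖y - c‖ ^ (-p)) =
      fun y => (Ici R).indicator (fun t : ℝ => t ^ (-p)) ‖y - c‖ := by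
  ext y
  by_cases hy : R ≤ ‖y - c‖ <;> simp [indicator, dist_eq_norm, hy]

variable {E : Type*} [NormedAddCommGroup E] [NormedSpace ℝ E] [FiniteDimensional ℝ E]
  [MeasurableSpace E] [BorelSpace E] [Nontrivial E] (μ : Measure E) [μ.IsAddHaarMeasure]

lemma integrableOn_compl_ball_norm_sub_rpow (c : E) (hR : 0 < R) (hp : (finrank ℝ E : ℝ) < p) :
    IntegrableOn (fun y => ‖y - c‖ ^ (-p)) (ball c R)ᶜ μ := by
  have hd := finrank_pos (R := ℝ) (M := E)
  rw [← integrable_indicator_iff measurableSet_ball.compl, indicator_compl_ball_norm_sub_rpow]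
  refine Integrable.comp_sub_right (f := fun y => (Ici R).indicator (fun t : ℝ => t ^ (-p)) ‖y‖)
    ((integrable_fun_norm_addHaar μ).2 ?_) c
  refine ((integrable_indicator_Ici_rpow hR (q := (finrank ℝ E : ℝ) - p - 1)
    (by linarith)).integrableOn).congr_fun (fun t ht => ?_) measurableSet_Ioi
  exact (pow_smul_indicator_rpow_neg hd ht).symm

lemma setIntegral_compl_ball_norm_sub_rpow (c : E) (hR : 0 < R)
    (hp : (finrank ℝ E : ℝ) < p) :
    ∫ y in (ball c R)ᶜ, ‖y - c‖ ^ (-p) ∂μ =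
      finrank ℝ E * μ.real (ball 0 1) * (R ^ ((finrank ℝ E : ℝ) - p) / (p - finrank ℝ E)) := by
  have hd := finrank_pos (R := ℝ) (M := E)
  have hradial : ∫ t in Ioi (0 : ℝ),
      t ^ (finrank ℝ E - 1) • (Ici R).indicator (fun t : ℝ => t ^ (-p)) t =
        R ^ ((finrank ℝ E : ℝ) - p) / (p - finrank ℝ E) := by
    rw [setIntegral_congr_fun measurableSet_Ioi (fun t ht => pow_smul_indicator_rpow_neg hd ht),
      setIntegral_indicator measurableSet_Ici, inter_eq_right.2 (Ici_subset_Ioi.2 hR),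
      integral_Ici_eq_integral_Ioi, integral_Ioi_rpow_of_lt (by linarith) hR]
    rw [show (finrank ℝ E : ℝ) - p - 1 + 1 = finrank ℝ E - p by ring, neg_div, ← div_neg, neg_sub]
  rw [← integral_indicator measurableSet_ball.compl, indicator_compl_ball_norm_sub_rpow,
    integral_sub_right_eq_self (fun y => (Ici R).indicator (fun t : ℝ => t ^ (-p)) ‖y‖),
    integral_fun_norm_addHaar, hradial, nsmul_eq_mul, smul_eq_mul, mul_assoc]

end RadialTail

lemma norm_integral_mul_le_of_integral_eq_zero_s18 {α : Type*} [MeasurableSpace α] {μ : Measure α}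
    {k : α → ℂ} {f : α → ℝ} {a : ℂ} {ε : ℝ} (hε : 0 ≤ ε) (hf : Integrable f μ)
    (hf0 : ∫ z, f z ∂μ = 0) (hk : ∀ z ∈ Function.support f, ‖k z - a‖ ≤ ε) :
    ‖∫ z, k z * f z ∂μ‖ ≤ ε * ∫ z, |f z| ∂μ := by
  by_cases hint : Integrable (fun z => k z * f z) μ
  swap
  · rw [integral_undef hint, norm_zero]
    exact mul_nonneg hε (integral_nonneg fun _ => abs_nonneg _)
  -- subtracting the constant `a` costs nothing because `f` has mean zero
  have hshift : ∫ z, k z * f z ∂μ = ∫ z, (k z - a) * f z ∂μ := by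
    have hmean : ∫ z, a * (f z : ℂ) ∂μ = 0 := by
      rw [integral_const_mul, integral_complex_ofReal, hf0, Complex.ofReal_zero, mul_zero]
    have hconst : Integrable (fun z => a * (f z : ℂ)) μ := hf.ofReal.const_mul a
    simp_rw [sub_mul]
    rw [integral_sub hint hconst, hmean, sub_zero]
  rw [hshift, ← integral_const_mul]
  refine norm_integral_le_of_norm_le (hf.abs.const_mul ε) (.of_forall fun z => ?_)
  rw [norm_mul, Complex.norm_real, Real.norm_eq_abs]
  by_cases hz : f z = 0
  · simp [hz]
  · exact mul_le_mul_of_nonneg_right (hk z hz) (abs_nonneg _)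

section KernelEstimate

variable {E : Type*} [NormedAddCommGroup E] [NormedSpace ℝ E] [MeasurableSpace E] {μ : Measure E}
  {K : E → E → ℂ} {f : E → ℝ} {c : E} {r δ C : ℝ}

lemma norm_integral_kernel_le_of_integral_eq_zero (hr : 0 < r) (hδ : 0 ≤ δ) (hC : 0 ≤ C)
    (hf : Integrable f μ) (hf0 : ∫ z, f z ∂μ = 0) (hsupp : Function.support f ⊆ closedBall c r)
    (hK : ∀ y z, y ≠ c → ‖c - z‖ ≤ ‖c - y‖ / 2 →
      ‖K y z - K y c‖ ≤ C * ‖c - z‖ ^ δ / ‖c - y‖ ^ ((finrank ℝ E : ℝ) + δ))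
    {y : E} (hy : y ∈ (ball c (2 * r))ᶜ) :
    ‖∫ z, K y z * f z ∂μ‖ ≤
      C * r ^ δ * (∫ z, |f z| ∂μ) * ‖y - c‖ ^ (-((finrank ℝ E : ℝ) + δ)) := by
  have hyc : 2 * r ≤ ‖c - y‖ := by
    simpa [dist_eq_norm, norm_sub_rev] using hy
  have hy_ne : y ≠ c := by
    rintro rfl
    simp only [sub_self, norm_zero] at hyc
    linarith
  have hbound : ∀ z ∈ Function.support f,
      ‖K y z - K y c‖ ≤ C * r ^ δ / ‖c - y‖ ^ ((finrank ℝ E : ℝ) + δ) := by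
    intro z hz
    have hzc : ‖c - z‖ ≤ r := by
      simpa [dist_eq_norm, norm_sub_rev] using hsupp hz
    calc ‖K y z - K y c‖ ≤ C * ‖c - z‖ ^ δ / ‖c - y‖ ^ ((finrank ℝ E : ℝ) + δ) :=
          hK y z hy_ne (by linarith)
      _ ≤ C * r ^ δ / ‖c - y‖ ^ ((finrank ℝ E : ℝ) + δ) := by gcongr
  calc ‖∫ z, K y z * f z ∂μ‖
      ≤ C * r ^ δ / ‖c - y‖ ^ ((finrank ℝ E : ℝ) + δ) * ∫ z, |f z| ∂μ :=
        norm_integral_mul_le_of_integral_eq_zero_s18 (by positivity) hf hf0 hbound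
    _ = C * r ^ δ * (∫ z, |f z| ∂μ) * ‖y - c‖ ^ (-((finrank ℝ E : ℝ) + δ)) := by
        rw [Real.rpow_neg (norm_nonneg _), norm_sub_rev]
        ring

variable [FiniteDimensional ℝ E] [BorelSpace E] [Nontrivial E] (μ) [μ.IsAddHaarMeasure]

theorem lintegral_compl_ball_norm_integral_kernel_le (hr : 0 < r) (hδ : 0 < δ) (hC : 0 ≤ C)
    (hf : Integrable f μ) (hf0 : ∫ z, f z ∂μ = 0) (hsupp : Function.support f ⊆ closedBall c r)
    (hK : ∀ y z, y ≠ c → ‖c - z‖ ≤ ‖c - y‖ / 2 →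
      ‖K y z - K y c‖ ≤ C * ‖c - z‖ ^ δ / ‖c - y‖ ^ ((finrank ℝ E : ℝ) + δ)) :
    ∫⁻ y in (ball c (2 * r))ᶜ, ‖∫ z, K y z * f z ∂μ‖ₑ ∂μ ≤
      ENNReal.ofReal (C * finrank ℝ E * μ.real (ball 0 1) / (2 ^ δ * δ) * ∫ z, |f z| ∂μ) := by
  set d : ℝ := (finrank ℝ E : ℝ)
  set B := C * r ^ δ * ∫ z, |f z| ∂μ
  have hB : 0 ≤ B := by
    have : 0 ≤ ∫ z, |f z| ∂μ := integral_nonneg fun z => abs_nonneg (f z)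
    positivity
  have hp : d < d + δ := by linarith
  calc ∫⁻ y in (ball c (2 * r))ᶜ, ‖∫ z, K y z * f z ∂μ‖ₑ ∂μ
      ≤ ∫⁻ y in (ball c (2 * r))ᶜ, ENNReal.ofReal (B * ‖y - c‖ ^ (-(d + δ))) ∂μ := by
        refine setLIntegral_mono' measurableSet_ball.compl fun y hy => ?_
        rw [← ofReal_norm]
        exact ENNReal.ofReal_le_ofReal
          (norm_integral_kernel_le_of_integral_eq_zero hr hδ.le hC hf hf0 hsupp hK hy)
    _ = ENNReal.ofReal (∫ y in (ball c (2 * r))ᶜ, B * ‖y - c‖ ^ (-(d + δ)) ∂μ) :=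
        (ofReal_integral_eq_lintegral_ofReal
          ((integrableOn_compl_ball_norm_sub_rpow μ c (by positivity) hp).const_mul B)
          (.of_forall fun y => by positivity)).symm
    _ = ENNReal.ofReal (C * d * μ.real (ball 0 1) / (2 ^ δ * δ) * ∫ z, |f z| ∂μ) := by
        rw [integral_const_mul, setIntegral_compl_ball_norm_sub_rpow μ c (by positivity) hp,
          show d - (d + δ) = -δ by ring, show d + δ - d = δ by ring,
          Real.rpow_neg (by positivity), Real.mul_rpow zero_le_two hr.le]
        have : 0 < r ^ δ := Real.rpow_pos_of_pos hr δ
        congr 1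
        simp only [B, d]
        field_simp

end KernelEstimate

section Cube

variable {n : ℕ} {c : EuclideanSpace ℝ (Fin n)}

lemma cube_subset_cube {r r' : ℝ} (h : r ≤ r') : cube c r ⊆ cube c r' :=
  fun _ hz i => (hz i).trans_le (by linarith)

lemma cube_subset_closedBall {r : ℝ} (hr : 0 ≤ r) : cube c r ⊆ closedBall c (√n * r / 2) := by
  intro z hz
  rw [mem_closedBall, EuclideanSpace.dist_eq]
  calc √(∑ i, dist (z i) (c i) ^ 2) ≤ √(∑ _i : Fin n, (r / 2) ^ 2) := by
        gcongr with i
        rw [Real.dist_eq]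
        exact (hz i).le
    _ = √n * r / 2 := by
        rw [Finset.sum_const, Finset.card_univ, Fintype.card_fin, nsmul_eq_mul,
          Real.sqrt_mul n.cast_nonneg, Real.sqrt_sq (by linarith), mul_div_assoc]

lemma ball_subset_cube (r : ℝ) : ball c r ⊆ cube c (2 * r) := by
  intro y hy i
  calc |y i - c i| = ‖(y - c) i‖ := by simp [Real.norm_eq_abs]
    _ ≤ ‖y - c‖ := PiLp.norm_apply_le _ i
    _ < 2 * r / 2 := by rw [← dist_eq_norm]; linarith [mem_ball.1 hy]

lemma union_cube_subset_closedBall {s ρ : ℝ} (hs : 0 ≤ s) :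
    cube c s ∪ cube c ρ ⊆ closedBall c (√n * max s ρ / 2) :=
  (union_subset (cube_subset_cube (le_max_left s ρ)) (cube_subset_cube (le_max_right s ρ))).trans
    (cube_subset_closedBall (hs.trans (le_max_left s ρ)))

lemma compl_union_cube_subset_compl_ball (s ρ : ℝ) :
    (cube c (2 * √n * s) ∪ cube c (2 * √n * ρ))ᶜ ⊆ (ball c (√n * max s ρ))ᶜ := by
  refine compl_subset_compl.2 ((ball_subset_cube _).trans ?_)
  rw [← mul_assoc]
  rcases max_choice s ρ with h | h <;> rw [h]
  exacts [subset_union_left, subset_union_right]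

end Cube

section MeanZeroCorrection

lemma support_sub_mul_indicator_subset {α : Type*} (b : α → ℝ) (E : Set α) (lam : ℝ) :
    Function.support (fun z => b z - lam * E.indicator 1 z) ⊆ Function.support b ∪ E := by
  intro z hz
  by_contra h
  simp only [mem_union, not_or, Function.mem_support, not_not] at h
  simp [h.1, indicator_of_notMem h.2] at hz

variable {α : Type*} [MeasurableSpace α] {μ : Measure α} {b : α → ℝ} {E : Set α} {lam : ℝ}

lemma integrable_mul_indicator_one (hE : MeasurableSet E) (hμE : μ E ≠ ∞) :
    Integrable (fun z => lam * E.indicator 1 z) μ :=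
  ((integrable_indicator_iff hE).2 (integrableOn_const hμE)).const_mul lam

lemma integral_sub_mul_indicator_eq_zero (hb : Integrable b μ) (hE : MeasurableSet E)
    (hμE : μ E ≠ ∞) (hmean : lam * (μ E).toReal = ∫ z, b z ∂μ) :
    ∫ z, (b z - lam * E.indicator 1 z) ∂μ = 0 := by
  rw [integral_sub hb (integrable_mul_indicator_one hE hμE), integral_const_mul,
    integral_indicator_one hE, measureReal_def, hmean, sub_self]

lemma integral_abs_sub_mul_indicator_le (hb : Integrable b μ) (hE : MeasurableSet E)
    (hμE : μ E ≠ ∞) (hlam : 0 ≤ lam) :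
    ∫ z, |b z - lam * E.indicator 1 z| ∂μ ≤ (∫ z, |b z| ∂μ) + lam * (μ E).toReal := by
  have hind := integrable_mul_indicator_one (μ := μ) (lam := lam) hE hμE
  calc ∫ z, |b z - lam * E.indicator 1 z| ∂μ ≤ ∫ z, (|b z| + lam * E.indicator 1 z) ∂μ := by
        refine integral_mono (hb.sub hind).abs (hb.abs.add hind)
          fun z => (abs_sub _ _).trans_eq ?_
        rw [abs_of_nonneg (mul_nonneg hlam (indicator_nonneg (f := 1) (fun _ _ => zero_le_one) z))]
    _ = (∫ z, |b z| ∂μ) + lam * (μ E).toReal := by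
        rw [integral_add hb.abs hind, integral_const_mul, integral_indicator_one hE,
          measureReal_def]

end MeanZeroCorrection

/-- The bad-part estimate: with `b` supported in `Q(c,s)`, `E ⊆ Q(c,ρ)` Borel with
`λ|E| = ∫ b`, and `K` smooth about `c`, one has
`∫_{ℝⁿ \ (Q(c,2√n s) ∪ Q(c,2√n ρ))} |T(b − λ𝟙_E)| ≤ C'(‖b‖₁ + λ|E|) ≤ 2C'‖b‖₁`. -/
theorem stmt18 (n : ℕ) (hn : 0 < n) (δ C : ℝ) (hδ : 0 < δ) (hC : 0 < C) :
    ∃ C' > (0 : ℝ), ∀ (K : EuclideanSpace ℝ (Fin n) → EuclideanSpace ℝ (Fin n) → ℂ)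
      (b : EuclideanSpace ℝ (Fin n) → ℝ) (c : EuclideanSpace ℝ (Fin n))
      (s ρ lam : ℝ) (E : Set (EuclideanSpace ℝ (Fin n))),
      0 < s → 0 < ρ → 0 < lam →
      Integrable b volume →
      Function.support b ⊆ cube c s →
      MeasurableSet E → E ⊆ cube c ρ →
      lam * (volume E).toReal = ∫ z, b z →
      (∀ y z : EuclideanSpace ℝ (Fin n), y ≠ c → ‖c - z‖ ≤ ‖c - y‖ / 2 →
        ‖K y z - K y c‖ ≤ C * ‖c - z‖ ^ δ / ‖c - y‖ ^ ((n : ℝ) + δ)) →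
      (∫⁻ y in (cube c (2 * Real.sqrt n * s) ∪ cube c (2 * Real.sqrt n * ρ))ᶜ,
          (‖∫ z, K y z * ((b z - lam * Set.indicator E 1 z : ℝ) : ℂ)‖₊ : ℝ≥0∞)) ≤
        ENNReal.ofReal (C' * ((∫ z, |b z|) + lam * (volume E).toReal)) ∧
      ENNReal.ofReal (C' * ((∫ z, |b z|) + lam * (volume E).toReal)) ≤
        ENNReal.ofReal (2 * C' * ∫ z, |b z|) := by
  have : Nontrivial (EuclideanSpace ℝ (Fin n)) :=
    Module.nontrivial_of_finrank_pos (R := ℝ) (by rwa [finrank_euclideanSpace_fin])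
  have hball : 0 < volume.real (ball (0 : EuclideanSpace ℝ (Fin n)) 1) :=
    ENNReal.toReal_pos (measure_ball_pos _ _ one_pos).ne' measure_ball_lt_top.ne
  have hC' : 0 < C * n * volume.real (ball (0 : EuclideanSpace ℝ (Fin n)) 1) / (2 ^ δ * δ) := by
    positivity
  refine ⟨_, hC', ?_⟩
  intro K b c s ρ lam E hs hρ hlam hb hsupp hE hEsub hmean hK
  have hμE : volume E ≠ ∞ := (measure_mono (hEsub.trans (cube_subset_closedBall hρ.le))).trans_lt
    measure_closedBall_lt_top |>.ne
  have hfsupp : Function.support (fun z => b z - lam * E.indicator 1 z) ⊆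
      closedBall c (√n * max s ρ / 2) :=
    (support_sub_mul_indicator_subset b E lam).trans <|
      (union_subset_union hsupp hEsub).trans (union_cube_subset_closedBall hs.le)
  have hestimate := lintegral_compl_ball_norm_integral_kernel_le volume
    (f := fun z => b z - lam * E.indicator 1 z)
    (by positivity) hδ hC.le (hb.sub (integrable_mul_indicator_one hE hμE))
    (integral_sub_mul_indicator_eq_zero hb hE hμE hmean) hfsupp
    (by simpa only [finrank_euclideanSpace_fin] using hK)
  rw [finrank_euclideanSpace_fin, mul_div_cancel₀ _ two_ne_zero] at hestimate
  have hbE : lam * (volume E).toReal ≤ ∫ z, |b z| :=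
    hmean.trans_le (integral_mono hb hb.abs fun z => le_abs_self (b z))
  refine ⟨?_, ENNReal.ofReal_le_ofReal (by nlinarith)⟩
  calc _ ≤ ∫⁻ y in (ball c (√n * max s ρ))ᶜ,
          ‖∫ z, K y z * ((b z - lam * E.indicator 1 z : ℝ) : ℂ)‖ₑ :=
        lintegral_mono_set (compl_union_cube_subset_compl_ball s ρ)
    _ ≤ _ := hestimate
    _ ≤ _ := by
      gcongr
      exact integral_abs_sub_mul_indicator_le hb hE hμE hlam.le
end
end
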